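/- Let Ω₁ be a nonempty bounded open convex subset of ℝ^d with boundary Γ = frontier(Ω₁), and let φ be the signed distance function of Γ. If x₁ ∈ Ω₁ and x₂ lies in the exterior of Ω₁ (i.e., x₂ ∉ closure(Ω₁)), then for every θ ∈ [0,1], φ(θx₁ + (1−θ)x₂) ≤ θφ(x₁) + (1−θ)φ(x₂). -/

import Mathlib

open Classical in
noncomputable def sdf {d : ℕ} (Ω : Set (EuclideanSpace ℝ (Fin d)))
    (x : EuclideanSpace ℝ (Fin d)) : ℝ :=
  if x ∈ Ω then -(Metric.infDist x (frontier Ω)) else Metric.infDist x (frontier Ω)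

/-! The signed distance `φ` is `1`-Lipschitz: a segment from a point of `Ω₁` to a point outside
crosses the frontier `Γ`. Let `r = dist(x₁, Γ)`, so `B(x₁, r) ⊆ Ω₁`. For `p ∈ Γ`, convexity gives
`θ • B(x₁, r) + (1 - θ) • p = B(θx₁ + (1 - θ)p, θr) ⊆ Ω₁`, hence `φ(θx₁ + (1 - θ)p) ≤ -θr`, and this
point is at distance `(1 - θ)‖x₂ - p‖` from `θx₁ + (1 - θ)x₂`. Taking the infimum over `p ∈ Γ`
gives `φ(θx₁ + (1 - θ)x₂) ≤ -θr + (1 - θ) dist(x₂, Γ)`. -/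

open Metric Set Pointwise

theorem IsPreconnected.inter_frontier_nonempty {X : Type*} [TopologicalSpace X] {s t : Set X}
    (hs : IsPreconnected s) (hst : (s ∩ t).Nonempty) (hs_t : (s \ t).Nonempty) :
    (s ∩ frontier t).Nonempty := by
  by_contra h
  have hcover : s ⊆ interior t ∪ (closure t)ᶜ := fun z hz => by
    by_cases hzi : z ∈ interior t
    · exact Or.inl hzi
    · exact Or.inr fun hzc => h ⟨z, hz, hzc, hzi⟩
  obtain ⟨a, has, hat⟩ := hst
  obtain ⟨b, hbs, hbt⟩ := hs_t
  have ha : a ∈ interior t := (hcover has).resolve_right (not_not.2 (subset_closure hat))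
  have hb : b ∈ (closure t)ᶜ := (hcover hbs).resolve_left fun hbi => hbt (interior_subset hbi)
  obtain ⟨z, -, hzi, hzc⟩ :=
    hs _ _ isOpen_interior isClosed_closure.isOpen_compl hcover ⟨a, has, ha⟩ ⟨b, hbs, hb⟩
  exact hzc (interior_subset_closure hzi)

section PseudoMetricSpace

variable {α : Type*} [PseudoMetricSpace α] {s : Set α} {x : α}

theorem le_infDist_frontier_of_ball_subset (hs : (frontier s).Nonempty) {ρ : ℝ}
    (h : ball x ρ ⊆ s) : ρ ≤ infDist x (frontier s) := by
  refine (le_infDist hs).2 fun z hz => not_lt.1 fun hzx => hz.2 ?_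
  exact interior_maximal h isOpen_ball (mem_ball'.2 hzx)

theorem le_add_mul_infDist (hs : s.Nonempty) {a b c : ℝ} (hc : 0 ≤ c)
    (h : ∀ p ∈ s, a ≤ b + c * dist x p) : a ≤ b + c * infDist x s := by
  rcases hc.eq_or_lt with rfl | hc
  · obtain ⟨p, hp⟩ := hs
    simpa using h p hp
  · have : (a - b) / c ≤ infDist x s :=
      (le_infDist hs).2 fun p hp => (div_le_iff₀' hc).2 (by linarith [h p hp])
    rw [div_le_iff₀' hc] at this
    linarith

end PseudoMetricSpace

section NormedSpace

variable {E : Type*} [NormedAddCommGroup E] [NormedSpace ℝ E] {s : Set E}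

theorem infDist_frontier_add_infDist_frontier_le_dist {a b : E} (ha : a ∈ s) (hb : b ∉ s) :
    infDist a (frontier s) + infDist b (frontier s) ≤ dist a b := by
  obtain ⟨z, hz, hzs⟩ := (convex_segment a b).isPreconnected.inter_frontier_nonempty
    ⟨a, left_mem_segment ℝ a b, ha⟩ ⟨b, right_mem_segment ℝ a b, hb⟩
  calc infDist a (frontier s) + infDist b (frontier s)
      ≤ dist a z + dist z b := by
        rw [dist_comm z]
        exact add_le_add (infDist_le_dist_of_mem hzs) (infDist_le_dist_of_mem hzs)
    _ = dist a b := dist_add_dist_of_mem_segment hz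

theorem ball_infDist_frontier_subset {x : E} (hx : x ∈ s) :
    ball x (infDist x (frontier s)) ⊆ s := fun w hw => by
  by_contra hws
  have := infDist_frontier_add_infDist_frontier_le_dist hx hws
  linarith [mem_ball'.1 hw, infDist_nonneg (x := w) (s := frontier s)]

theorem Convex.ball_combo_subset_interior (hs : Convex ℝ s) {x p : E} {r a b : ℝ}
    (hx : ball x r ⊆ s) (hp : p ∈ closure s) (ha : 0 < a) (hb : 0 ≤ b) (hab : a + b = 1) :
    ball (a • x + b • p) (a * r) ⊆ interior s := by
  have hball : ball (a • x + b • p) (a * r) = a • ball x r + b • {p} := by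
    rw [_root_.smul_ball ha.ne', smul_set_singleton, ball_add_singleton, Real.norm_of_nonneg ha.le]
  rw [hball]
  exact (add_subset_add (smul_set_mono (interior_maximal hx isOpen_ball))
    (smul_set_mono (singleton_subset_iff.2 hp))).trans
    (hs.combo_interior_closure_subset_interior ha hb hab)

end NormedSpace

section SDF

variable {d : ℕ} {Ω : Set (EuclideanSpace ℝ (Fin d))} {x : EuclideanSpace ℝ (Fin d)}

theorem sdf_of_mem (hx : x ∈ Ω) : sdf Ω x = -infDist x (frontier Ω) := if_pos hx

theorem sdf_of_notMem (hx : x ∉ Ω) : sdf Ω x = infDist x (frontier Ω) := if_neg hx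

theorem lipschitzWith_one_sdf (Ω : Set (EuclideanSpace ℝ (Fin d))) : LipschitzWith 1 (sdf Ω) := by
  refine LipschitzWith.of_le_add fun x y => ?_
  by_cases hx : x ∈ Ω <;> by_cases hy : y ∈ Ω
  · rw [sdf_of_mem hx, sdf_of_mem hy]
    linarith [infDist_le_infDist_add_dist (x := y) (y := x) (s := frontier Ω), dist_comm x y]
  · rw [sdf_of_mem hx, sdf_of_notMem hy]
    linarith [infDist_nonneg (x := x) (s := frontier Ω), infDist_nonneg (x := y) (s := frontier Ω),
      dist_nonneg (x := x) (y := y)]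
  · rw [sdf_of_notMem hx, sdf_of_mem hy]
    linarith [infDist_frontier_add_infDist_frontier_le_dist hy hx, dist_comm x y]
  · rw [sdf_of_notMem hx, sdf_of_notMem hy]
    exact infDist_le_infDist_add_dist

theorem sdf_le_neg_of_ball_subset (hΩ : (frontier Ω).Nonempty) (hx : x ∈ Ω) {ρ : ℝ}
    (h : ball x ρ ⊆ Ω) : sdf Ω x ≤ -ρ := by
  rw [sdf_of_mem hx]
  exact neg_le_neg (le_infDist_frontier_of_ball_subset hΩ h)

end SDF

theorem stmt_5_general {d : ℕ} (Ω₁ : Set (EuclideanSpace ℝ (Fin d)))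
    (hopen : IsOpen Ω₁)
    (hconv : Convex ℝ Ω₁) (x₁ x₂ : EuclideanSpace ℝ (Fin d))
    (hx₁ : x₁ ∈ Ω₁) (hx₂ : x₂ ∉ closure Ω₁) :
    ∀ θ : ℝ, 0 ≤ θ → θ ≤ 1 →
      sdf Ω₁ (θ • x₁ + (1 - θ) • x₂) ≤ θ * sdf Ω₁ x₁ + (1 - θ) * sdf Ω₁ x₂ := by
  intro θ hθ0 hθ1
  rcases hθ0.eq_or_lt with rfl | hθ
  · simp
  have hx₂' : x₂ ∉ Ω₁ := fun h => hx₂ (subset_closure h)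
  obtain ⟨z, -, hz⟩ := (convex_segment x₁ x₂).isPreconnected.inter_frontier_nonempty
    ⟨x₁, left_mem_segment ℝ x₁ x₂, hx₁⟩ ⟨x₂, right_mem_segment ℝ x₁ x₂, hx₂'⟩
  have hΓ : (frontier Ω₁).Nonempty := ⟨z, hz⟩
  set r := infDist x₁ (frontier Ω₁)
  have hx₁' : x₁ ∈ interior Ω₁ := hopen.interior_eq.symm ▸ hx₁
  have key : ∀ p ∈ frontier Ω₁,
      sdf Ω₁ (θ • x₁ + (1 - θ) • x₂) ≤ -(θ * r) + (1 - θ) * dist x₂ p := by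
    intro p hp
    have hp' : p ∈ closure Ω₁ := frontier_subset_closure hp
    have hy' : θ • x₁ + (1 - θ) • p ∈ Ω₁ := interior_subset <|
      hconv.combo_interior_closure_mem_interior hx₁' hp' hθ (by linarith) (by ring)
    have hball : ball (θ • x₁ + (1 - θ) • p) (θ * r) ⊆ Ω₁ :=
      (hconv.ball_combo_subset_interior (ball_infDist_frontier_subset hx₁) hp' hθ
        (by linarith) (by ring)).trans interior_subset
    calc sdf Ω₁ (θ • x₁ + (1 - θ) • x₂)
        ≤ sdf Ω₁ (θ • x₁ + (1 - θ) • p)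
            + dist (θ • x₁ + (1 - θ) • x₂) (θ • x₁ + (1 - θ) • p) := by
          simpa only [NNReal.coe_one, one_mul] using (lipschitzWith_one_sdf Ω₁).le_add_mul _ _
      _ ≤ -(θ * r) + (1 - θ) * dist x₂ p := by
          rw [dist_add_left, dist_smul₀, Real.norm_of_nonneg (by linarith)]
          exact add_le_add_left (sdf_le_neg_of_ball_subset hΓ hy' hball) _
  rw [sdf_of_mem hx₁, sdf_of_notMem hx₂']
  linarith [le_add_mul_infDist hΓ (by linarith) key]

/-- convexity inequality for the SDF with one point inside `Ω₁`
and one point in the exterior. -/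
theorem stmt_5 {d : ℕ} (Ω₁ : Set (EuclideanSpace ℝ (Fin d)))
    (hne : Ω₁.Nonempty) (hbdd : Bornology.IsBounded Ω₁) (hopen : IsOpen Ω₁)
    (hconv : Convex ℝ Ω₁) (x₁ x₂ : EuclideanSpace ℝ (Fin d))
    (hx₁ : x₁ ∈ Ω₁) (hx₂ : x₂ ∉ closure Ω₁) :
    ∀ θ : ℝ, 0 ≤ θ → θ ≤ 1 →
      sdf Ω₁ (θ • x₁ + (1 - θ) • x₂) ≤ θ * sdf Ω₁ x₁ + (1 - θ) * sdf Ω₁ x₂ :=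
  stmt_5_general Ω₁ hopen hconv x₁ x₂ hx₁ hx₂
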